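/- With |η^{(q)}_{k,r}⟩ defined as above, the partial trace over the first tensor factor satisfies: Tr_A(|η^{(q)}_{m·k',r}⟩⟨η^{(u)}_{m·l',r}|) = (1/(2M)) Σ_{s ∈ ZMod 2} Σ_{t ∈ G} |b^{(q+s)}_{t⁻¹k',r}⟩⟨b^{(u+s)}_{t⁻¹l',r}|, which is independent of m ∈ G. -/
import Mathlib


open scoped BigOperators
open Matrix

/-- Index set of `ℂ^{2MR}`: `ZMod 2 × G × Fin R`. -/
abbrev Idx (G : Type*) (R : ℕ) := ZMod 2 × G × Fin R

/-- Orthonormal basis condition (w.r.t. the standard inner product). -/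
def IsONB {ι : Type*} [Fintype ι] [DecidableEq ι] (a : ι → ι → ℂ) : Prop :=
  ∀ j k, star (a j) ⬝ᵥ a k = if j = k then 1 else 0

/-- Tensor product of vectors. -/
def tensV {ι : Type*} (v w : ι → ℂ) : ι × ι → ℂ := fun p => v p.1 * w p.2

/-- `|η^{(q)}_{k,r}⟩ = (1/√(2M)) Σ_{s∈ZMod 2} Σ_{t∈G} |a^{(s)}_{t,r}⟩ ⊗ |b^{(q+s)}_{t⁻¹k,r}⟩`. -/
noncomputable def etaAGU {G : Type*} [CommGroup G] [Fintype G] {R : ℕ}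
    (a b : Idx G R → Idx G R → ℂ) (x : Idx G R) : Idx G R × Idx G R → ℂ :=
  ((Real.sqrt (2 * Fintype.card G) : ℂ))⁻¹ •
    ∑ s : ZMod 2, ∑ t : G, tensV (a (s, t, x.2.2)) (b (x.1 + s, t⁻¹ * x.2.1, x.2.2))

/-- Partial trace over the first tensor factor. -/
noncomputable def ptrA {ι : Type*} [Fintype ι]
    (M : Matrix (ι × ι) (ι × ι) ℂ) : Matrix ι ι ℂ :=
  Matrix.of fun j j' => ∑ i : ι, M (i, j) (i, j')

private lemma ptrA_smul {ι : Type*} [Fintype ι] (c : ℂ) (M : Matrix (ι × ι) (ι × ι) ℂ) :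
    ptrA (c • M) = c • ptrA M := by
  ext j j'
  simp [ptrA, Finset.mul_sum]

private lemma ptrA_vecMulVec_sum {ι κ κ' : Type*} [Fintype ι] [Fintype κ] [Fintype κ']
    (v1 w1 : κ → ι → ℂ) (v2 w2 : κ' → ι → ℂ) :
    ptrA (Matrix.vecMulVec (∑ x : κ, tensV (v1 x) (w1 x))
        (star (∑ y : κ', tensV (v2 y) (w2 y))))
      = ∑ x : κ, ∑ y : κ', (star (v2 y) ⬝ᵥ v1 x) • Matrix.vecMulVec (w1 x) (star (w2 y)) := by
  ext j j'
  simp only [ptrA, Matrix.of_apply, Matrix.vecMulVec_apply, Matrix.sum_apply, Matrix.smul_apply,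
    Finset.sum_apply, Pi.star_apply, star_sum, tensV, star_mul', smul_eq_mul, dotProduct]
  rw [show (∑ i : ι, (∑ x : κ, v1 x i * w1 x j) * ∑ y : κ', star (v2 y i) * star (w2 y j'))
      = ∑ i : ι, ∑ x : κ, ∑ y : κ', (v1 x i * w1 x j) * (star (v2 y i) * star (w2 y j')) from
    Finset.sum_congr rfl fun i _ => by rw [Finset.sum_mul_sum]]
  rw [Finset.sum_comm]
  refine Finset.sum_congr rfl fun x _ => ?_
  rw [Finset.sum_comm]
  refine Finset.sum_congr rfl fun y _ => ?_
  rw [Finset.sum_mul]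
  exact Finset.sum_congr rfl fun i _ => by ring

/-- `Tr_A(|η^{(q)}_{m·k',r}⟩⟨η^{(u)}_{m·l',r}|)
  = (1/(2M)) Σ_{s∈ZMod 2} Σ_{t∈G} |b^{(q+s)}_{t⁻¹k',r}⟩⟨b^{(u+s)}_{t⁻¹l',r}|`,
which is independent of `m ∈ G`. -/
theorem ptrA_etaAGU {G : Type*} [CommGroup G] [Fintype G] [DecidableEq G]
    {R : ℕ} (hR : 1 ≤ R)
    (a b : Idx G R → Idx G R → ℂ) (ha : IsONB a) (hb : IsONB b) :
    ∀ (q u : ZMod 2) (k' l' m : G) (r : Fin R),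
      ptrA (Matrix.vecMulVec (etaAGU a b (q, m * k', r)) (star (etaAGU a b (u, m * l', r))))
        = ((2 * Fintype.card G : ℂ))⁻¹ •
            ∑ s : ZMod 2, ∑ t : G,
              Matrix.vecMulVec (b (q + s, t⁻¹ * k', r)) (star (b (u + s, t⁻¹ * l', r))) := by
  intro q u k' l' m r
  set c : ℂ := ((Real.sqrt (2 * Fintype.card G) : ℂ))⁻¹ with hc
  have hM : (0:ℝ) ≤ 2 * (Fintype.card G : ℝ) := by positivity
  have hcc : c * c = ((2 * Fintype.card G : ℂ))⁻¹ := by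
    rw [hc, ← mul_inv, ← Complex.ofReal_mul, Real.mul_self_sqrt hM]
    push_cast
    ring_nf
  have hstarc : star c = c := by
    simp [hc, ← Complex.ofReal_inv]
  have h1 : etaAGU a b (q, m * k', r)
      = c • ∑ p : ZMod 2 × G, tensV (a (p.1, p.2, r)) (b (q + p.1, p.2⁻¹ * (m * k'), r)) := by
    rw [etaAGU, Fintype.sum_prod_type]
  have h2 : etaAGU a b (u, m * l', r)
      = c • ∑ p : ZMod 2 × G, tensV (a (p.1, p.2, r)) (b (u + p.1, p.2⁻¹ * (m * l'), r)) := by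
    rw [etaAGU, Fintype.sum_prod_type]
  have expand : ∀ v w : Idx G R × Idx G R → ℂ,
      Matrix.vecMulVec (c • v) (c • w) = (c * c) • Matrix.vecMulVec v w := by
    intro v w
    ext p p'
    simp only [Matrix.vecMulVec_apply, Pi.smul_apply, Matrix.smul_apply, smul_eq_mul]
    ring
  have ha' : ∀ p p' : ZMod 2 × G,
      star (a (p'.1, p'.2, r)) ⬝ᵥ a (p.1, p.2, r) = if p' = p then (1:ℂ) else 0 := by
    intro p p'
    rw [ha]
    exact if_congr (by simp [Prod.ext_iff]) rfl rfl
  rw [h1, h2, star_smul, hstarc, expand, ptrA_smul, ptrA_vecMulVec_sum, hcc]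
  congr 1
  simp only [ha', ite_smul, one_smul, zero_smul, Finset.sum_ite_eq', Finset.mem_univ, if_true]
  rw [Fintype.sum_prod_type]
  refine Finset.sum_congr rfl fun s _ => ?_
  refine Fintype.sum_equiv (Equiv.mulLeft m⁻¹) _ _ fun t => ?_
  have e1 : ((Equiv.mulLeft m⁻¹) t)⁻¹ * k' = t⁻¹ * (m * k') := by
    simp only [Equiv.coe_mulLeft]
    group
  have e2 : ((Equiv.mulLeft m⁻¹) t)⁻¹ * l' = t⁻¹ * (m * l') := by
    simp only [Equiv.coe_mulLeft]
    group
  rw [e1, e2]
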